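/- (Value bound, second inequality) Let X, A, S be finite nonempty sets, P : X × A → (X → ℝ) a transition kernel, r : X × A → ℝ, γ ∈ (0,1), and T the Bellman optimality operator of this MDP. Let φ : X → S be surjective, and let (S, A, P_φ, R_φ, γ) be an abstract MDP with kernel P_φ : S × A → (S → ℝ) and reward R_φ : S × A → ℝ satisfying 0 ≤ R_φ(s, a) ≤ R_max for all s, a. Let Q*_φ : S × A → ℝ be a fixed point of the abstract Bellman optimality operator (T_φ Q)(s, a) = R_φ(s, a) + γ Σ_{s'} P_φ(s' | s, a) max_{a'} Q(s', a'), and let the lift be [Q*_φ]_M(x, a) = Q*_φ(φ(x), a). Assume: (i) |R_φ(φ(x), a) − r(x, a)| ≤ ε_R for all x, a; and (ii) Σ_{s' ∈ S} |P_φ(s' | φ(x), a) − Σ_{x' ∈ φ^{-1}(s')} P(x' | x, a)| ≤ ε_P for all x, a. Then for all x ∈ X, a ∈ A, |[Q*_φ]_M(x, a) − (T [Q*_φ]_M)(x, a)| ≤ ε_R + γ · ε_P · R_max / (2(1 − γ)); in particular, for any probability distribution μ on X × A, ‖[Q*_φ]_M − T [Q*_φ]_M‖_{2,μ} ≤ ε_R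 + γ · ε_P · R_max / (2(1 − γ)). -/

import Mathlib

/-! The lift `[Q*_φ]_M` satisfies `[Q*_φ]_M(x, a) = (T_φ Q*_φ)(φ x, a)`, so its Bellman residual at
`(x, a)` is the reward error plus `γ` times the difference of the expectations of the abstract
state values `V = max_a Q*_φ(·, a)` under `P_φ(· | φ x, a)` and under the lifted transition
distribution. Both are probability distributions, so that difference does not change when `V` is
centred at `R_max / (2(1 - γ))`; as a fixed point of `T_φ` with rewards in `[0, R_max]`, `V` takes
values in `[0, R_max / (1 - γ)]`, so the centred values are at most `R_max / (2(1 - γ))` in absolute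
value, and the difference is at most `ε_P R_max / (2(1 - γ))`. -/

/-- The Bellman optimality operator of a finite MDP:
`(TQ)(x, a) = r(x, a) + γ Σ_{x'} P(x' | x, a) max_{a'} Q(x', a')`. -/
def bellmanOpt {X A : Type} [Fintype X] [Fintype A] [Nonempty A]
    (P : X → A → X → ℝ) (r : X → A → ℝ) (γ : ℝ) (Q : X → A → ℝ) : X → A → ℝ :=
  fun x a => r x a + γ * ∑ x', P x a x' *
    Finset.univ.sup' Finset.univ_nonempty (fun a' => Q x' a')

/-- The weighted 2-norm `‖f‖_{2,μ} = (Σ_{(x,a)} μ(x,a) f(x,a)²)^{1/2}`. -/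
noncomputable def norm2 {X A : Type} [Fintype X] [Fintype A]
    (μ : X × A → ℝ) (f : X → A → ℝ) : ℝ :=
  Real.sqrt (∑ p : X × A, μ p * (f p.1 p.2) ^ 2)

open Finset

def stateValue {X A : Type} [Fintype A] [Nonempty A] (Q : X → A → ℝ) (x : X) : ℝ :=
  univ.sup' univ_nonempty (Q x)

/-- The lifted transition distribution `s ↦ Σ_{x ∈ φ⁻¹(s)} p(x)`. -/
def pushforward {X S : Type} [Fintype X] [DecidableEq S] (φ : X → S) (p : X → ℝ) (s : S) : ℝ :=
  ∑ x ∈ univ.filter (fun x => φ x = s), p x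

section WeightedSums

variable {ι : Type} [Fintype ι] {w f : ι → ℝ} {M : ℝ}

lemma sum_mul_le_of_forall_le (hw : ∀ i, 0 ≤ w i) (hw1 : ∑ i, w i = 1) (hf : ∀ i, f i ≤ M) :
    ∑ i, w i * f i ≤ M :=
  calc ∑ i, w i * f i ≤ ∑ i, w i * M :=
        sum_le_sum fun i _ => mul_le_mul_of_nonneg_left (hf i) (hw i)
    _ = M := by rw [← sum_mul, hw1, one_mul]

lemma le_sum_mul_of_forall_le (hw : ∀ i, 0 ≤ w i) (hw1 : ∑ i, w i = 1) (hf : ∀ i, M ≤ f i) :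
    M ≤ ∑ i, w i * f i :=
  calc M = ∑ i, w i * M := by rw [← sum_mul, hw1, one_mul]
    _ ≤ ∑ i, w i * f i := sum_le_sum fun i _ => mul_le_mul_of_nonneg_left (hf i) (hw i)

/-- A signed measure of total mass zero does not see constants, so it pairs with `v` as with the
centred `v - c`. -/
lemma abs_sum_mul_le_of_sum_eq_zero {Δ v : ι → ℝ} {c ρ : ℝ} (hΔ : ∑ i, Δ i = 0)
    (hv : ∀ i, |v i - c| ≤ ρ) : |∑ i, Δ i * v i| ≤ (∑ i, |Δ i|) * ρ := by
  have hcentre : ∑ i, Δ i * v i = ∑ i, Δ i * (v i - c) := by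
    simp only [mul_sub, sum_sub_distrib, ← sum_mul, hΔ, zero_mul, sub_zero]
  calc |∑ i, Δ i * v i| ≤ ∑ i, |Δ i| * |v i - c| := by
        rw [hcentre]
        simpa only [abs_mul] using abs_sum_le_sum_abs (fun i => Δ i * (v i - c)) univ
    _ ≤ ∑ i, |Δ i| * ρ := sum_le_sum fun i _ => mul_le_mul_of_nonneg_left (hv i) (abs_nonneg _)
    _ = (∑ i, |Δ i|) * ρ := (sum_mul ..).symm

end WeightedSums

lemma sum_pushforward {X S : Type} [Fintype X] [Fintype S] [DecidableEq S] (φ : X → S)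
    (p : X → ℝ) : ∑ s, pushforward φ p s = ∑ x, p x :=
  sum_fiberwise univ φ p

lemma sum_mul_comp_eq_sum_pushforward_mul {X S : Type} [Fintype X] [Fintype S] [DecidableEq S]
    (φ : X → S) (p : X → ℝ) (v : S → ℝ) :
    ∑ x, p x * v (φ x) = ∑ s, pushforward φ p s * v s := by
  rw [← sum_fiberwise univ φ]
  refine sum_congr rfl fun s _ => ?_
  rw [pushforward, sum_mul]
  exact sum_congr rfl fun x hx => by rw [(mem_filter.mp hx).2]

section FixedPoint

variable {S A : Type} [Fintype S] [Fintype A] [Nonempty A] {P : S → A → S → ℝ} {R : S → A → ℝ}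
  {γ : ℝ} {Q : S → A → ℝ}

lemma bellmanOpt_apply (s : S) (a : A) :
    bellmanOpt P R γ Q s a = R s a + γ * ∑ s', P s a s' * stateValue Q s' :=
  rfl

lemma eq_reward_add_of_isFixedPt (hQ : Function.IsFixedPt (bellmanOpt P R γ) Q) (s : S) (a : A) :
    Q s a = R s a + γ * ∑ s', P s a s' * stateValue Q s' :=
  (congr_fun₂ hQ s a).symm

lemma stateValue_le_of_isFixedPt (hP_nonneg : ∀ s a s', 0 ≤ P s a s')
    (hP_sum : ∀ s a, ∑ s', P s a s' = 1) {Rmax : ℝ} (hR : ∀ s a, R s a ≤ Rmax) (hγ0 : 0 ≤ γ)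
    (hγ1 : γ < 1) (hQ : Function.IsFixedPt (bellmanOpt P R γ) Q) (s : S) :
    stateValue Q s ≤ Rmax / (1 - γ) := by
  obtain ⟨sMax, -, hsMax⟩ := exists_max_image univ (stateValue Q) ⟨s, mem_univ s⟩
  obtain ⟨a, -, ha⟩ := exists_mem_eq_sup' univ_nonempty (Q sMax)
  have hexp := sum_mul_le_of_forall_le (hP_nonneg sMax a) (hP_sum sMax a)
    fun s' => hsMax s' (mem_univ s')
  have hsMax_le : stateValue Q sMax ≤ Rmax + γ * stateValue Q sMax :=
    calc stateValue Q sMax = Q sMax a := ha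
      _ = R sMax a + γ * ∑ s', P sMax a s' * stateValue Q s' :=
          eq_reward_add_of_isFixedPt hQ sMax a
      _ ≤ Rmax + γ * stateValue Q sMax := by gcongr; exact hR sMax a
  rw [le_div_iff₀ (by linarith)]
  nlinarith [hsMax s (mem_univ s)]

lemma stateValue_nonneg_of_isFixedPt (hP_nonneg : ∀ s a s', 0 ≤ P s a s')
    (hP_sum : ∀ s a, ∑ s', P s a s' = 1) (hR : ∀ s a, 0 ≤ R s a) (hγ0 : 0 ≤ γ) (hγ1 : γ < 1)
    (hQ : Function.IsFixedPt (bellmanOpt P R γ) Q) (s : S) : 0 ≤ stateValue Q s := by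
  obtain ⟨sMin, -, hsMin⟩ := exists_min_image univ (stateValue Q) ⟨s, mem_univ s⟩
  obtain ⟨a⟩ := ‹Nonempty A›
  have hexp := le_sum_mul_of_forall_le (hP_nonneg sMin a) (hP_sum sMin a)
    fun s' => hsMin s' (mem_univ s')
  have hsMin_ge : γ * stateValue Q sMin ≤ stateValue Q sMin := by
    calc γ * stateValue Q sMin ≤ R sMin a + γ * ∑ s', P sMin a s' * stateValue Q s' := by
          linarith [hR sMin a, mul_le_mul_of_nonneg_left hexp hγ0]
      _ = Q sMin a := (eq_reward_add_of_isFixedPt hQ sMin a).symm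
      _ ≤ stateValue Q sMin := le_sup' (Q sMin) (mem_univ a)
  nlinarith [hsMin s (mem_univ s)]

lemma abs_stateValue_sub_le_of_isFixedPt (hP_nonneg : ∀ s a s', 0 ≤ P s a s')
    (hP_sum : ∀ s a, ∑ s', P s a s' = 1) {Rmax : ℝ}
    (hR : ∀ s a, 0 ≤ R s a ∧ R s a ≤ Rmax) (hγ0 : 0 ≤ γ) (hγ1 : γ < 1)
    (hQ : Function.IsFixedPt (bellmanOpt P R γ) Q) (s : S) :
    |stateValue Q s - Rmax / (2 * (1 - γ))| ≤ Rmax / (2 * (1 - γ)) := by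
  have hnonneg := stateValue_nonneg_of_isFixedPt hP_nonneg hP_sum (fun s a => (hR s a).1)
    hγ0 hγ1 hQ s
  have hle := stateValue_le_of_isFixedPt hP_nonneg hP_sum (fun s a => (hR s a).2) hγ0 hγ1 hQ s
  have hhalf : Rmax / (1 - γ) = 2 * (Rmax / (2 * (1 - γ))) := by
    have : 1 - γ ≠ 0 := by linarith
    field_simp
  rw [abs_le]
  constructor <;> linarith

end FixedPoint

lemma bellmanOpt_comp_sub_bellmanOpt_lift {X S A : Type} [Fintype X] [Fintype S] [Fintype A]
    [Nonempty A] [DecidableEq S] (P : X → A → X → ℝ) (r : X → A → ℝ) (φ : X → S)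
    (Pφ : S → A → S → ℝ) (Rφ : S → A → ℝ) (γ : ℝ) (Q : S → A → ℝ) (x : X) (a : A) :
    bellmanOpt Pφ Rφ γ Q (φ x) a - bellmanOpt P r γ (fun x a => Q (φ x) a) x a
      = (Rφ (φ x) a - r x a)
        + γ * ∑ s', (Pφ (φ x) a s' - pushforward φ (P x a) s') * stateValue Q s' := by
  have hlift : ∑ x', P x a x' * stateValue (fun x a => Q (φ x) a) x'
      = ∑ s', pushforward φ (P x a) s' * stateValue Q s' :=
    sum_mul_comp_eq_sum_pushforward_mul φ (P x a) (stateValue Q)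
  rw [bellmanOpt_apply, bellmanOpt_apply, hlift]
  simp only [sub_mul, sum_sub_distrib]
  ring

lemma abs_bellmanOpt_comp_sub_bellmanOpt_lift_le {X S A : Type} [Fintype X] [Fintype S]
    [Fintype A] [Nonempty A] [DecidableEq S] {P : X → A → X → ℝ} {r : X → A → ℝ} {φ : X → S}
    {Pφ : S → A → S → ℝ} {Rφ : S → A → ℝ} {γ : ℝ} {Q : S → A → ℝ} {x : X} {a : A}
    {c εR εP : ℝ} (hP_sum : ∑ x', P x a x' = 1) (hPφ_sum : ∑ s', Pφ (φ x) a s' = 1)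
    (hγ0 : 0 ≤ γ) (hcentred : ∀ s, |stateValue Q s - c| ≤ c)
    (hreward : |Rφ (φ x) a - r x a| ≤ εR)
    (htrans : ∑ s', |Pφ (φ x) a s' - pushforward φ (P x a) s'| ≤ εP) :
    |bellmanOpt Pφ Rφ γ Q (φ x) a - bellmanOpt P r γ (fun x a => Q (φ x) a) x a|
      ≤ εR + γ * εP * c := by
  have hc : 0 ≤ c := (abs_nonneg _).trans (hcentred (φ x))
  have hmass : ∑ s', (Pφ (φ x) a s' - pushforward φ (P x a) s') = 0 := by
    rw [sum_sub_distrib, sum_pushforward, hPφ_sum, hP_sum, sub_self]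
  have hexp : |∑ s', (Pφ (φ x) a s' - pushforward φ (P x a) s') * stateValue Q s'| ≤ εP * c :=
    (abs_sum_mul_le_of_sum_eq_zero hmass hcentred).trans (mul_le_mul_of_nonneg_right htrans hc)
  rw [bellmanOpt_comp_sub_bellmanOpt_lift, mul_assoc]
  refine (abs_add_le _ _).trans (add_le_add hreward ?_)
  rw [abs_mul, abs_of_nonneg hγ0]
  exact mul_le_mul_of_nonneg_left hexp hγ0

lemma norm2_le_of_forall_abs_le {X A : Type} [Fintype X] [Fintype A] {μ : X × A → ℝ}
    (hμ0 : ∀ p, 0 ≤ μ p) (hμ1 : ∑ p, μ p = 1) {f : X → A → ℝ} {B : ℝ}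
    (hf : ∀ x a, |f x a| ≤ B) : norm2 μ f ≤ B := by
  have hne : Nonempty (X × A) := by
    by_contra h
    rw [not_nonempty_iff] at h
    simp at hμ1
  obtain ⟨p⟩ := hne
  have hB : 0 ≤ B := (abs_nonneg _).trans (hf p.1 p.2)
  rw [norm2, Real.sqrt_le_left hB]
  refine sum_mul_le_of_forall_le hμ0 hμ1 fun q => ?_
  rw [← sq_abs]
  exact pow_le_pow_left₀ (abs_nonneg _) (hf q.1 q.2) 2

theorem value_bound_second_inequality_general
    (X A S : Type) [Fintype X] [Fintype A] [Fintype S]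
    [Nonempty A] [DecidableEq S]
    (P : X → A → X → ℝ)
    (hP_sum : ∀ x a, ∑ x', P x a x' = 1)
    (r : X → A → ℝ) (γ : ℝ) (hγ0 : 0 < γ) (hγ1 : γ < 1)
    (φ : X → S)
    (Pφ : S → A → S → ℝ)
    (hPφ_nonneg : ∀ s a s', 0 ≤ Pφ s a s')
    (hPφ_sum : ∀ s a, ∑ s', Pφ s a s' = 1)
    (Rφ : S → A → ℝ) (Rmax : ℝ)
    (hRφ : ∀ s a, 0 ≤ Rφ s a ∧ Rφ s a ≤ Rmax)
    (Qφ : S → A → ℝ)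
    (hQφ : ∀ s a, Qφ s a = bellmanOpt Pφ Rφ γ Qφ s a)
    (εR εP : ℝ)
    (hreward : ∀ x a, |Rφ (φ x) a - r x a| ≤ εR)
    (htrans : ∀ x a, ∑ s', |Pφ (φ x) a s'
        - ∑ x' ∈ Finset.univ.filter (fun x' => φ x' = s'), P x a x'| ≤ εP) :
    (∀ x a, |Qφ (φ x) a - bellmanOpt P r γ (fun x a => Qφ (φ x) a) x a|
        ≤ εR + γ * εP * Rmax / (2 * (1 - γ))) ∧
    (∀ μ : X × A → ℝ, (∀ p, 0 ≤ μ p) → (∑ p, μ p = 1) →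
      norm2 μ (fun x a => Qφ (φ x) a - bellmanOpt P r γ (fun x a => Qφ (φ x) a) x a)
        ≤ εR + γ * εP * Rmax / (2 * (1 - γ))) := by
  have hfix : Function.IsFixedPt (bellmanOpt Pφ Rφ γ) Qφ := funext₂ fun s a => (hQφ s a).symm
  have hpointwise : ∀ x a, |Qφ (φ x) a - bellmanOpt P r γ (fun x a => Qφ (φ x) a) x a|
      ≤ εR + γ * εP * Rmax / (2 * (1 - γ)) := fun x a => by
    rw [hQφ (φ x) a, mul_div_assoc]
    exact abs_bellmanOpt_comp_sub_bellmanOpt_lift_le (hP_sum x a) (hPφ_sum (φ x) a) hγ0.le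
      (abs_stateValue_sub_le_of_isFixedPt hPφ_nonneg hPφ_sum hRφ hγ0.le hγ1 hfix) (hreward x a)
      (htrans x a)
  exact ⟨hpointwise, fun μ hμ0 hμ1 => norm2_le_of_forall_abs_le hμ0 hμ1 hpointwise⟩

/-- Value bound, second inequality: the lift of the abstract optimal value
function has Bellman residual at most `ε_R + γ ε_P R_max / (2(1−γ))`, pointwise and hence
in any weighted 2-norm. -/
theorem value_bound_second_inequality
    (X A S : Type) [Fintype X] [Fintype A] [Fintype S]
    [Nonempty X] [Nonempty A] [Nonempty S] [DecidableEq S]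
    (P : X → A → X → ℝ)
    (hP_nonneg : ∀ x a x', 0 ≤ P x a x')
    (hP_sum : ∀ x a, ∑ x', P x a x' = 1)
    (r : X → A → ℝ) (γ : ℝ) (hγ0 : 0 < γ) (hγ1 : γ < 1)
    (φ : X → S) (hφ_surj : Function.Surjective φ)
    (Pφ : S → A → S → ℝ)
    (hPφ_nonneg : ∀ s a s', 0 ≤ Pφ s a s')
    (hPφ_sum : ∀ s a, ∑ s', Pφ s a s' = 1)
    (Rφ : S → A → ℝ) (Rmax : ℝ)
    (hRφ : ∀ s a, 0 ≤ Rφ s a ∧ Rφ s a ≤ Rmax)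
    (Qφ : S → A → ℝ)
    (hQφ : ∀ s a, Qφ s a = bellmanOpt Pφ Rφ γ Qφ s a)
    (εR εP : ℝ)
    (hreward : ∀ x a, |Rφ (φ x) a - r x a| ≤ εR)
    (htrans : ∀ x a, ∑ s', |Pφ (φ x) a s'
        - ∑ x' ∈ Finset.univ.filter (fun x' => φ x' = s'), P x a x'| ≤ εP) :
    (∀ x a, |Qφ (φ x) a - bellmanOpt P r γ (fun x a => Qφ (φ x) a) x a|
        ≤ εR + γ * εP * Rmax / (2 * (1 - γ))) ∧
    (∀ μ : X × A → ℝ, (∀ p, 0 ≤ μ p) → (∑ p, μ p = 1) →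
      norm2 μ (fun x a => Qφ (φ x) a - bellmanOpt P r γ (fun x a => Qφ (φ x) a) x a)
        ≤ εR + γ * εP * Rmax / (2 * (1 - γ))) :=
  value_bound_second_inequality_general X A S P hP_sum r γ hγ0 hγ1 φ Pφ hPφ_nonneg hPφ_sum Rφ Rmax
    hRφ Qφ hQφ εR εP hreward htrans
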